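/- arXiv:2209.12596 — 5 statements merged into one kernel-verified Lean document; each statement's English description precedes it below -/
import Mathlib

section
/- Let X, Y, Z be Hilbert spaces, K ∈ L(X,Y), P ∈ L(X,Z), and suppose ker(K)⊥ ⊆ ker(P). Then for every α > 0, the operator K*K + P*P + α·id is invertible and ‖(K*K + P*P + α·id)⁻¹ K*K‖ ≤ 1. -/
open ContinuousLinearMap
open RealInnerProductSpace

section Aux

variable {V : Type*} [NormedAddCommGroup V] [InnerProductSpace ℝ V] [CompleteSpace V]

/-- A coercive bounded operator on a real Hilbert space is a continuous linear equivalence. -/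
noncomputable def coerciveEquiv (T : V →L[ℝ] V) {α : ℝ} (hα : 0 < α)
    (hc : ∀ x, α * (‖x‖ * ‖x‖) ≤ ⟪T x, x⟫) : V ≃L[ℝ] V := by
  have hbelow : ∀ v, α * ‖v‖ ≤ ‖T v‖ := by
    intro v
    by_cases h : 0 < ‖v‖
    · refine (mul_le_mul_iff_of_pos_right h).mp ?_
      calc α * ‖v‖ * ‖v‖ ≤ ⟪T v, v⟫ := by rw [mul_assoc]; exact hc v
        _ ≤ ‖T v‖ * ‖v‖ := real_inner_le_norm (T v) v
    · have : v = 0 := by simpa using h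
      simp [this]
  have hanti : AntilipschitzWith (α⁻¹).toNNReal T := by
    refine ContinuousLinearMap.antilipschitz_of_bound T ?_
    intro x
    rw [Real.coe_toNNReal', max_eq_left_of_lt (inv_pos.mpr hα),
      ← inv_mul_le_iff₀ (inv_pos.mpr hα)]
    simpa using hbelow x
  have hker : LinearMap.ker (T : V →ₗ[ℝ] V) = ⊥ := by
    rw [LinearMap.ker_eq_bot]; exact hanti.injective
  have hclosed : IsClosed (LinearMap.range (T : V →ₗ[ℝ] V) : Set V) :=
    hanti.isClosed_range T.uniformContinuous
  have hrange : LinearMap.range (T : V →ₗ[ℝ] V) = ⊤ := by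
    haveI := hclosed.completeSpace_coe
    rw [← (LinearMap.range (T : V →ₗ[ℝ] V)).orthogonal_orthogonal]
    rw [Submodule.eq_top_iff']
    intro v w hw
    obtain rfl : w = 0 := by
      have h1 : ⟪T w, w⟫ = 0 := hw _ ⟨w, rfl⟩
      have h2 : α * (‖w‖ * ‖w‖) ≤ 0 := h1 ▸ hc w
      rcases eq_or_lt_of_le (norm_nonneg w) with h | h
      · exact norm_eq_zero.mp h.symm
      · exact absurd h2 (not_le.mpr (mul_pos hα (mul_pos h h)))
    exact inner_zero_left _
  exact ContinuousLinearEquiv.ofBijective T hker hrange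

@[simp]
theorem coerciveEquiv_coe (T : V →L[ℝ] V) {α : ℝ} (hα : 0 < α)
    (hc : ∀ x, α * (‖x‖ * ‖x‖) ≤ ⟪T x, x⟫) :
    (coerciveEquiv T hα hc : V →L[ℝ] V) = T := rfl

end Aux

/-- Lemma (spectral bounds, case (a), first estimate): for Hilbert spaces `X, Y, Z`,
`K ∈ L(X,Y)`, `P ∈ L(X,Z)` with `ker(K)ᗮ ⊆ ker(P)` and `α > 0`, the operator
`K*K + P*P + α·id` is boundedly invertible and `‖(K*K + P*P + α·id)⁻¹ K*K‖ ≤ 1`. -/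
theorem inv_comp_KstarK_norm_le_one
    {X Y Z : Type*}
    [NormedAddCommGroup X] [InnerProductSpace ℝ X] [CompleteSpace X]
    [NormedAddCommGroup Y] [InnerProductSpace ℝ Y] [CompleteSpace Y]
    [NormedAddCommGroup Z] [InnerProductSpace ℝ Z] [CompleteSpace Z]
    (K : X →L[ℝ] Y) (P : X →L[ℝ] Z)
    (hker : (LinearMap.ker (K : X →ₗ[ℝ] Y))ᗮ ≤ LinearMap.ker (P : X →ₗ[ℝ] Z))
    (α : ℝ) (hα : 0 < α) :
    ∃ T : X ≃L[ℝ] X,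
      (T : X →L[ℝ] X) =
        (ContinuousLinearMap.adjoint K).comp K + (ContinuousLinearMap.adjoint P).comp P
          + α • (1 : X →L[ℝ] X) ∧
      ‖((T.symm : X →L[ℝ] X)).comp ((ContinuousLinearMap.adjoint K).comp K)‖ ≤ 1 := by
  set C : X →L[ℝ] X := (ContinuousLinearMap.adjoint K).comp K with hCdef
  set D : X →L[ℝ] X := (ContinuousLinearMap.adjoint P).comp P with hDdef
  have hCinner : ∀ x : X, ⟪C x, x⟫ = ‖K x‖ * ‖K x‖ := fun x => by
    simp [hCdef, comp_apply, adjoint_inner_left, real_inner_self_eq_norm_mul_norm, pow_two]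
  have hDinner : ∀ x : X, ⟪D x, x⟫ = ‖P x‖ * ‖P x‖ := fun x => by
    simp [hDdef, comp_apply, adjoint_inner_left, real_inner_self_eq_norm_mul_norm, pow_two]
  have hcA : ∀ x : X, α * (‖x‖ * ‖x‖) ≤ ⟪(C + D + α • (1 : X →L[ℝ] X)) x, x⟫ := by
    intro x
    simp only [add_apply, smul_apply, ContinuousLinearMap.one_apply, inner_add_left, real_inner_smul_left]
    rw [hCinner, hDinner, real_inner_self_eq_norm_mul_norm]
    nlinarith [norm_nonneg (K x), norm_nonneg (P x)]
  have hcAα : ∀ x : X, α * (‖x‖ * ‖x‖) ≤ ⟪(C + α • (1 : X →L[ℝ] X)) x, x⟫ := by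
    intro x
    simp only [add_apply, smul_apply, ContinuousLinearMap.one_apply, inner_add_left, real_inner_smul_left]
    rw [hCinner, real_inner_self_eq_norm_mul_norm]
    nlinarith [norm_nonneg (K x)]
  set T : X ≃L[ℝ] X := coerciveEquiv _ hα hcA with hTdef
  set Tα : X ≃L[ℝ] X := coerciveEquiv _ hα hcAα with hTαdef
  have hT : ∀ z : X, T z = C z + D z + α • z := fun z => rfl
  have hTα : ∀ z : X, Tα z = C z + α • z := fun z => rfl
  refine ⟨T, rfl, ?_⟩
  -- P ∘ K† = 0
  have hPK : ∀ y : Y, P ((ContinuousLinearMap.adjoint K) y) = 0 := by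
    intro y
    have hmem : (ContinuousLinearMap.adjoint K) y ∈ (LinearMap.ker (K : X →ₗ[ℝ] Y))ᗮ := by
      rw [Submodule.mem_orthogonal]
      intro u hu
      rw [real_inner_comm, adjoint_inner_left]
      simp [show K u = 0 from LinearMap.mem_ker.mp hu]
    exact LinearMap.mem_ker.mp (hker hmem)
  have hDC : ∀ x : X, D (C x) = 0 := fun x => by
    simp [hDdef, hCdef, comp_apply, hPK]
  -- C commutes with Tα.symm
  have hcomm : ∀ x : X, Tα.symm (C x) = C (Tα.symm x) := by
    intro x
    have key : Tα (C (Tα.symm x)) = C x := by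
      rw [hTα, ← map_smul, ← map_add, ← hTα, Tα.apply_symm_apply]
    have h2 := congrArg Tα.symm key
    rw [Tα.symm_apply_apply] at h2
    exact h2.symm
  -- T.symm ∘ C = C ∘ Tα.symm
  have hS : ∀ x : X, T.symm (C x) = C (Tα.symm x) := by
    intro x
    have key : T (C (Tα.symm x)) = C x := by
      rw [hT, hDC, add_zero, ← map_smul, ← map_add, ← hTα, Tα.apply_symm_apply]
    have h2 := congrArg T.symm key
    rw [T.symm_apply_apply] at h2
    exact h2.symm
  refine opNorm_le_bound _ zero_le_one fun x => ?_
  rw [one_mul, comp_apply, ContinuousLinearEquiv.coe_coe, hS]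
  set z := Tα.symm x with hz
  set y := C z with hy
  have hxz : x = y + α • z := by rw [hy, ← hTα z, hz, Tα.apply_symm_apply]
  have hCz : (0 : ℝ) ≤ ⟪C z, z⟫ := by rw [hCinner]; positivity
  have h1 : ‖y‖ * ‖y‖ ≤ ⟪y, x⟫ := by
    rw [hxz, inner_add_right, real_inner_smul_right, real_inner_self_eq_norm_mul_norm]
    have : ⟪y, z⟫ = ⟪C z, z⟫ := by rw [hy]
    nlinarith
  have h2 : ⟪y, x⟫ ≤ ‖y‖ * ‖x‖ := real_inner_le_norm y x
  nlinarith [norm_nonneg y, norm_nonneg x]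
end

section
/- Let X, Y, Z be Hilbert spaces, K ∈ L(X,Y), P ∈ L(X,Z), and suppose ker(K)⊥ ⊆ ker(P). Then for every α > 0, ‖(K*K + P*P + α·id)⁻¹ K*‖ ≤ 1/√α. -/
set_option maxHeartbeats 1000000

open ContinuousLinearMap InnerProductSpace
open scoped RealInnerProductSpace

/-- Lemma (spectral bounds, case (a), second estimate): for Hilbert spaces `X, Y, Z`,
`K ∈ L(X,Y)`, `P ∈ L(X,Z)` with `ker(K)ᗮ ⊆ ker(P)` and `α > 0`, the operator
`K*K + P*P + α·id` is boundedly invertible and `‖(K*K + P*P + α·id)⁻¹ K*‖ ≤ 1/√α`. -/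
theorem inv_comp_Kstar_norm_le_inv_sqrt
    {X Y Z : Type*}
    [NormedAddCommGroup X] [InnerProductSpace ℝ X] [CompleteSpace X]
    [NormedAddCommGroup Y] [InnerProductSpace ℝ Y] [CompleteSpace Y]
    [NormedAddCommGroup Z] [InnerProductSpace ℝ Z] [CompleteSpace Z]
    (K : X →L[ℝ] Y) (P : X →L[ℝ] Z)
    (hker : (LinearMap.ker (K : X →ₗ[ℝ] Y))ᗮ ≤ LinearMap.ker (P : X →ₗ[ℝ] Z))
    (α : ℝ) (hα : 0 < α) :
    ∃ T : X ≃L[ℝ] X,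
      (T : X →L[ℝ] X) =
        (ContinuousLinearMap.adjoint K).comp K + (ContinuousLinearMap.adjoint P).comp P
          + α • (1 : X →L[ℝ] X) ∧
      ‖((T.symm : X →L[ℝ] X)).comp (ContinuousLinearMap.adjoint K)‖ ≤ 1 / Real.sqrt α := by
  set A : X →L[ℝ] X :=
    (ContinuousLinearMap.adjoint K).comp K + (ContinuousLinearMap.adjoint P).comp P
      + α • (1 : X →L[ℝ] X) with hA
  have hAinner : ∀ u : X, ⟪A u, u⟫ = ‖K u‖ ^ 2 + ‖P u‖ ^ 2 + α * ‖u‖ ^ 2 := by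
    intro u
    simp only [hA, ContinuousLinearMap.add_apply, ContinuousLinearMap.comp_apply,
      ContinuousLinearMap.smul_apply, ContinuousLinearMap.one_apply,
      inner_add_left, inner_smul_left, ContinuousLinearMap.adjoint_inner_left]
    rw [real_inner_self_eq_norm_sq, real_inner_self_eq_norm_sq, real_inner_self_eq_norm_sq]
    simp [starRingEnd_apply]
  set B : X →L[ℝ] X →L[ℝ] ℝ := (innerSL ℝ).comp A with hB
  have hBapp : ∀ u w : X, B u w = ⟪A u, w⟫ := fun u w => rfl
  have hcoer : IsCoercive B := by
    refine ⟨α, hα, fun u => ?_⟩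
    rw [hBapp, hAinner]
    have h1 : (0:ℝ) ≤ ‖K u‖ ^ 2 := sq_nonneg _
    have h2 : (0:ℝ) ≤ ‖P u‖ ^ 2 := sq_nonneg _
    nlinarith [sq_nonneg (‖u‖)]
  set T := hcoer.continuousLinearEquivOfBilin with hT
  have hTA : (T : X →L[ℝ] X) = A := by
    ext v
    exact (hcoer.unique_continuousLinearEquivOfBilin (fun w => (hBapp v w).symm)).symm
  refine ⟨T, hTA, ?_⟩
  have hs : 0 < Real.sqrt α := Real.sqrt_pos.mpr hα
  apply ContinuousLinearMap.opNorm_le_bound _ (by positivity)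
  intro v
  set u : X := T.symm ((ContinuousLinearMap.adjoint K) v) with hu
  have hAu : A u = (ContinuousLinearMap.adjoint K) v := by
    rw [← hTA]; exact T.apply_symm_apply _
  have key : ‖K u‖ ^ 2 + ‖P u‖ ^ 2 + α * ‖u‖ ^ 2 ≤ ‖v‖ * ‖K u‖ := by
    rw [← hAinner, hAu, ContinuousLinearMap.adjoint_inner_left]
    exact real_inner_le_norm _ _
  have hKu : ‖K u‖ ≤ ‖v‖ := by
    rcases eq_or_lt_of_le (norm_nonneg (K u)) with h | h
    · rw [← h]; exact norm_nonneg v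
    · nlinarith [sq_nonneg (‖P u‖), sq_nonneg (‖u‖)]
  have hαu : α * ‖u‖ ^ 2 ≤ ‖v‖ ^ 2 := by
    nlinarith [sq_nonneg (‖P u‖), norm_nonneg (K u), norm_nonneg v]
  have : ‖u‖ ≤ ‖v‖ / Real.sqrt α := by
    rw [le_div_iff₀ hs]
    have h1 : (‖u‖ * Real.sqrt α) ^ 2 ≤ ‖v‖ ^ 2 := by
      rw [mul_pow, Real.sq_sqrt hα.le]; nlinarith [sq_nonneg (‖u‖)]
    calc ‖u‖ * Real.sqrt α = Real.sqrt ((‖u‖ * Real.sqrt α) ^ 2) :=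
          (Real.sqrt_sq (by positivity)).symm
      _ ≤ Real.sqrt (‖v‖ ^ 2) := Real.sqrt_le_sqrt h1
      _ = ‖v‖ := Real.sqrt_sq (norm_nonneg v)
  calc ‖(T.symm : X →L[ℝ] X).comp (ContinuousLinearMap.adjoint K) v‖ = ‖u‖ := rfl
    _ ≤ ‖v‖ / Real.sqrt α := this
    _ = 1 / Real.sqrt α * ‖v‖ := by ring
end

section
/- Let X, Y, Z be Hilbert spaces, K ∈ L(X,Y), P ∈ L(X,Z), and suppose P*P commutes with (K*K)^{1/2}. Then for every α > 0, ‖(K*K + P*P + α·id)⁻¹ K*K‖ ≤ 2. -/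
/-- Lemma (spectral bounds, case (b)): for Hilbert spaces `X, Y, Z`, `K ∈ L(X,Y)`,
`P ∈ L(X,Z)` such that `P*P` commutes with `(K*K)^{1/2}` (the latter formalized as any
nonnegative selfadjoint square root `S` of `K*K`), and `α > 0`, the operator
`K*K + P*P + α·id` is boundedly invertible and `‖(K*K + P*P + α·id)⁻¹ K*K‖ ≤ 2`. -/
theorem inv_comp_KstarK_norm_le_two_of_commute
    {X Y Z : Type*}
    [NormedAddCommGroup X] [InnerProductSpace ℝ X] [CompleteSpace X]
    [NormedAddCommGroup Y] [InnerProductSpace ℝ Y] [CompleteSpace Y]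
    [NormedAddCommGroup Z] [InnerProductSpace ℝ Z] [CompleteSpace Z]
    (K : X →L[ℝ] Y) (P : X →L[ℝ] Z)
    (S : X →L[ℝ] X) (hS_sa : IsSelfAdjoint S)
    (hS_nonneg : ∀ x : X, 0 ≤ (inner ℝ (S x) x : ℝ))
    (hS_sq : S.comp S = (ContinuousLinearMap.adjoint K).comp K)
    (hcomm : Commute ((ContinuousLinearMap.adjoint P).comp P) S)
    (α : ℝ) (hα : 0 < α) :
    ∃ T : X ≃L[ℝ] X,
      (T : X →L[ℝ] X) =
        (ContinuousLinearMap.adjoint K).comp K + (ContinuousLinearMap.adjoint P).comp P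
          + α • (1 : X →L[ℝ] X) ∧
      ‖((T.symm : X →L[ℝ] X)).comp ((ContinuousLinearMap.adjoint K).comp K)‖ ≤ 2 := by
  set Q : X →L[ℝ] X := (ContinuousLinearMap.adjoint P).comp P with hQ
  set A : X →L[ℝ] X := (ContinuousLinearMap.adjoint K).comp K + Q + α • (1 : X →L[ℝ] X)
    with hA
  have hSadj : ContinuousLinearMap.adjoint S = S :=
    (ContinuousLinearMap.isSelfAdjoint_iff' ).mp hS_sa
  have hSinner : ∀ x y : X, (inner ℝ (S x) y : ℝ) = inner ℝ x (S y) := by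
    intro x y
    conv_lhs => rw [← hSadj]
    exact ContinuousLinearMap.adjoint_inner_left S y x
  -- inner ℝ product with A
  have hAinner : ∀ x y : X, (inner ℝ (A x) y : ℝ)
      = inner ℝ (K x) (K y) + inner ℝ (P x) (P y) + α * inner ℝ x y := by
    intro x y
    simp only [hA, ContinuousLinearMap.add_apply, ContinuousLinearMap.smul_apply,
      ContinuousLinearMap.one_apply, ContinuousLinearMap.comp_apply,
      inner_add_left, inner_smul_left, ContinuousLinearMap.adjoint_inner_left, hQ]
    ring_nf
    simp [real_inner_comm]
    ring
  -- coercivity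
  have B : X →L[ℝ] X →L[ℝ] ℝ := (innerSL ℝ).comp A
  have hco : IsCoercive ((innerSL ℝ).comp A) := by
    refine ⟨α, hα, fun u => ?_⟩
    have h1 : ((innerSL ℝ).comp A) u u = (inner ℝ (A u) u : ℝ) := rfl
    rw [h1, hAinner]
    have h2 : (0:ℝ) ≤ inner ℝ (K u) (K u) := real_inner_self_nonneg
    have h3 : (0:ℝ) ≤ inner ℝ (P u) (P u) := real_inner_self_nonneg
    have h4 : (inner ℝ u u : ℝ) = ‖u‖ * ‖u‖ := real_inner_self_eq_norm_mul_norm u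
    rw [h4]
    linarith
  refine ⟨hco.continuousLinearEquivOfBilin, ?_, ?_⟩
  · -- T = A
    ext v
    refine ext_inner_right ℝ (fun w => ?_)
    exact hco.continuousLinearEquivOfBilin_apply v w
  · -- norm bound
    have hTA : (hco.continuousLinearEquivOfBilin : X →L[ℝ] X) = A := by
      ext v
      refine ext_inner_right ℝ (fun w => ?_)
      exact hco.continuousLinearEquivOfBilin_apply v w
    set T := hco.continuousLinearEquivOfBilin with hT
    have hTapp : ∀ v : X, T v = A v := fun v => by
      rw [← hTA]; rfl
    -- A commutes with S
    have hAS : A.comp S = S.comp A := by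
      have h1 : ((ContinuousLinearMap.adjoint K).comp K).comp S
          = S.comp ((ContinuousLinearMap.adjoint K).comp K) := by
        rw [← hS_sq]; ext v; simp [ContinuousLinearMap.comp_apply]
      have h2 : Q.comp S = S.comp Q := hcomm
      ext v
      simp only [hA, ContinuousLinearMap.comp_apply, ContinuousLinearMap.add_apply,
        ContinuousLinearMap.smul_apply, ContinuousLinearMap.one_apply, map_add, map_smul]
      have := congrFun (congrArg DFunLike.coe h1) v
      have h2' := congrFun (congrArg DFunLike.coe h2) v
      simp only [ContinuousLinearMap.comp_apply] at this h2'
      rw [this, h2']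
    apply ContinuousLinearMap.opNorm_le_bound _ (by norm_num)
    intro x
    -- u := T.symm (S x)
    set u : X := T.symm (S x) with hu
    have hAu : A u = S x := by rw [← hTapp]; exact T.apply_symm_apply (S x)
    -- T.symm (K*K x) = S u
    have hkey : T.symm (((ContinuousLinearMap.adjoint K).comp K) x) = S u := by
      have : A (S u) = ((ContinuousLinearMap.adjoint K).comp K) x := by
        have := congrFun (congrArg DFunLike.coe hAS) u
        simp only [ContinuousLinearMap.comp_apply] at this
        rw [this, hAu, ← hS_sq]; rfl
      have h4 : T (S u) = ((ContinuousLinearMap.adjoint K).comp K) x := by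
        rw [hTapp]; exact this
      rw [← h4]; exact T.symm_apply_apply (S u)
    have hc : ((T.symm : X →L[ℝ] X)).comp ((ContinuousLinearMap.adjoint K).comp K) x
        = T.symm (((ContinuousLinearMap.adjoint K).comp K) x) := rfl
    rw [hc, hkey]
    -- bound ‖S u‖ ≤ ‖x‖
    have hSu2 : ‖S u‖ ^ 2 ≤ (inner ℝ (A u) u : ℝ) := by
      rw [hAinner]
      have hKu : (inner ℝ (K u) (K u) : ℝ) = ‖S u‖ ^ 2 := by
        have : (inner ℝ (K u) (K u) : ℝ) = inner ℝ (((ContinuousLinearMap.adjoint K).comp K) u) u := by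
          simp [ContinuousLinearMap.comp_apply, ContinuousLinearMap.adjoint_inner_left]
        rw [this, ← hS_sq]
        have : (inner ℝ ((S.comp S) u) u : ℝ) = inner ℝ (S u) (S u) := by
          simp only [ContinuousLinearMap.comp_apply]
          exact hSinner (S u) u
        rw [this, real_inner_self_eq_norm_sq]
      have h3 : (0:ℝ) ≤ inner ℝ (P u) (P u) := real_inner_self_nonneg
      have h4 : (0:ℝ) ≤ α * inner ℝ u u := by
        have := real_inner_self_nonneg (x := u); positivity
      linarith [hKu ▸ le_refl (inner ℝ (K u) (K u) : ℝ), h3, h4, hKu.symm.le]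
    have hAux : (inner ℝ (A u) u : ℝ) = inner ℝ x (S u) := by
      rw [hAu, hSinner]
    have hSu_le : ‖S u‖ ≤ ‖x‖ := by
      rcases eq_or_ne (S u) 0 with h | h
      · simp [h]
      · have h5 : (inner ℝ x (S u) : ℝ) ≤ ‖x‖ * ‖S u‖ := real_inner_le_norm x (S u)
        have h6 : ‖S u‖ ^ 2 ≤ ‖x‖ * ‖S u‖ := by
          calc ‖S u‖ ^ 2 ≤ (inner ℝ (A u) u : ℝ) := hSu2
          _ = inner ℝ x (S u) := hAux
          _ ≤ ‖x‖ * ‖S u‖ := h5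
        have hpos : 0 < ‖S u‖ := norm_pos_iff.mpr h
        nlinarith
    calc ‖S u‖ ≤ ‖x‖ := hSu_le
    _ ≤ 2 * ‖x‖ := by nlinarith [norm_nonneg x]
end

section
/- Let X, Y, Z be Hilbert spaces, K ∈ L(X,Y), P ∈ L(X,Z) with ker(K)⊥ ⊆ ker(P), α > 0, δ ≥ 0, c ∈ (0,1). Suppose e := xₙ − x† and the Newton error identity x₊ − x† = (K*K + P*P + α·id)⁻¹ ( K*η + K*K w + α v ) holds with ‖η‖ ≤ δ, ‖w‖ ≤ c‖e‖, v = x₀ − x†. Then ‖x₊ − x†‖ ≤ δ/√α + c‖e‖ + α‖(K*K + P*P + α·id)⁻¹ v‖. -/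
set_option maxHeartbeats 800000 in
/-- One-step error estimate for the frozen Newton method: under the nullspace condition
`ker(K)ᗮ ⊆ ker(P)`, from the error identity
`x₊ − x† = (K*K + P*P + α id)⁻¹ (K* η + K*K w + α v)` with `‖η‖ ≤ δ`,
`‖w‖ ≤ c ‖xₙ − x†‖`, `v = x₀ − x†`, one obtains
`‖x₊ − x†‖ ≤ δ/√α + c ‖xₙ − x†‖ + α ‖(K*K + P*P + α id)⁻¹ v‖`. -/
theorem frozen_newton_one_step_estimate
    {X Y Z : Type*}
    [NormedAddCommGroup X] [InnerProductSpace ℝ X] [CompleteSpace X]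
    [NormedAddCommGroup Y] [InnerProductSpace ℝ Y] [CompleteSpace Y]
    [NormedAddCommGroup Z] [InnerProductSpace ℝ Z] [CompleteSpace Z]
    (K : X →L[ℝ] Y) (P : X →L[ℝ] Z)
    (hker : (LinearMap.ker (K : X →ₗ[ℝ] Y))ᗮ ≤ LinearMap.ker (P : X →ₗ[ℝ] Z))
    (α δ c : ℝ) (hα : 0 < α) (hδ : 0 ≤ δ) (hc0 : 0 < c) (hc1 : c < 1)
    (T : X ≃L[ℝ] X)
    (hT : (T : X →L[ℝ] X) =
      (ContinuousLinearMap.adjoint K).comp K + (ContinuousLinearMap.adjoint P).comp P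
        + α • (1 : X →L[ℝ] X))
    (xn xdag xplus x₀ : X) (η : Y) (wvec v : X)
    (hv : v = x₀ - xdag)
    (hη : ‖η‖ ≤ δ)
    (hw : ‖wvec‖ ≤ c * ‖xn - xdag‖)
    (hid : xplus - xdag = T.symm
      ((ContinuousLinearMap.adjoint K) η
        + ((ContinuousLinearMap.adjoint K).comp K) wvec + α • v)) :
    ‖xplus - xdag‖ ≤ δ / Real.sqrt α + c * ‖xn - xdag‖ + α * ‖T.symm v‖ := by
  have hTapp : ∀ x : X, T x = (ContinuousLinearMap.adjoint K) (K x)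
      + (ContinuousLinearMap.adjoint P) (P x) + α • x := by
    intro x
    have : (T : X →L[ℝ] X) x = ((ContinuousLinearMap.adjoint K).comp K
        + (ContinuousLinearMap.adjoint P).comp P + α • (1 : X →L[ℝ] X)) x := by rw [hT]
    simpa using this
  have hTinner : ∀ x : X, (inner ℝ (T x) x : ℝ) = ‖K x‖ ^ 2 + ‖P x‖ ^ 2 + α * ‖x‖ ^ 2 := by
    intro x
    rw [hTapp]
    rw [inner_add_left, inner_add_left, inner_smul_left,
      ContinuousLinearMap.adjoint_inner_left, ContinuousLinearMap.adjoint_inner_left,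
      real_inner_self_eq_norm_sq, real_inner_self_eq_norm_sq, real_inner_self_eq_norm_sq]
    norm_num
  -- Bound 1 : ‖T.symm (K* η)‖ ≤ δ / √α
  set x := T.symm ((ContinuousLinearMap.adjoint K) η) with hxdef
  have hx : T x = (ContinuousLinearMap.adjoint K) η := T.apply_symm_apply _
  have h1 : ‖K x‖ ^ 2 + ‖P x‖ ^ 2 + α * ‖x‖ ^ 2 ≤ ‖η‖ * ‖K x‖ := by
    have := hTinner x
    rw [hx] at this
    rw [ContinuousLinearMap.adjoint_inner_left] at this
    calc ‖K x‖ ^ 2 + ‖P x‖ ^ 2 + α * ‖x‖ ^ 2 = (inner ℝ η (K x) : ℝ) := this.symm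
      _ ≤ ‖η‖ * ‖K x‖ := real_inner_le_norm _ _
  have hsq : α * ‖x‖ ^ 2 ≤ ‖η‖ ^ 2 := by
    nlinarith [sq_nonneg (‖η‖ - 2 * ‖K x‖), sq_nonneg (‖P x‖)]
  have hb1 : ‖x‖ ≤ δ / Real.sqrt α := by
    have hsα : 0 < Real.sqrt α := Real.sqrt_pos.mpr hα
    rw [le_div_iff₀ hsα]
    have hαs : Real.sqrt α ^ 2 = α := Real.sq_sqrt hα.le
    nlinarith [norm_nonneg x, norm_nonneg η, sq_nonneg (‖x‖ * Real.sqrt α - ‖η‖),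
      sq_nonneg (‖x‖ * Real.sqrt α + ‖η‖), hη, hδ]
  -- Decompose wvec
  haveI : CompleteSpace (LinearMap.ker (K : X →ₗ[ℝ] Y)) := (ContinuousLinearMap.isClosed_ker K).completeSpace_coe
  obtain ⟨w₀, hw₀, w₁, hw₁, hwsum⟩ :=
    (LinearMap.ker (K : X →ₗ[ℝ] Y) : Submodule ℝ X).exists_add_mem_mem_orthogonal wvec
  have hKw₀ : K w₀ = 0 := hw₀
  have hPw₁ : P w₁ = 0 := hker hw₁
  have hw₁le : ‖w₁‖ ≤ ‖wvec‖ := by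
    have hperp : (inner ℝ w₀ w₁ : ℝ) = 0 := hw₁ w₀ hw₀
    have : ‖wvec‖ ^ 2 = ‖w₀‖ ^ 2 + ‖w₁‖ ^ 2 := by
      rw [hwsum, norm_add_sq_real, hperp]; ring
    nlinarith [norm_nonneg w₀, norm_nonneg w₁, norm_nonneg wvec]
  -- Bound 2 : ‖T.symm (K*K wvec)‖ ≤ ‖wvec‖
  set u := T.symm w₁ with hudef
  have hu : T u = w₁ := T.apply_symm_apply _
  have hKKw : ((ContinuousLinearMap.adjoint K).comp K) wvec = T (w₁ - α • u) := by
    have : K wvec = K w₁ := by rw [hwsum]; simp [hKw₀]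
    rw [map_sub, map_smul, hu, hTapp w₁, hPw₁]
    simp [this]
  have hsymmKK : T.symm (((ContinuousLinearMap.adjoint K).comp K) wvec) = w₁ - α • u := by
    rw [hKKw, T.symm_apply_apply]
  have hb2 : ‖w₁ - α • u‖ ≤ ‖wvec‖ := by
    have hinner : (inner ℝ w₁ u : ℝ) = ‖K u‖ ^ 2 + ‖P u‖ ^ 2 + α * ‖u‖ ^ 2 := by
      rw [← hu]; exact hTinner u
    have hns : ‖w₁ - α • u‖ ^ 2 = ‖w₁‖ ^ 2 - 2 * α * (inner ℝ w₁ u : ℝ) + α ^ 2 * ‖u‖ ^ 2 := by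
      rw [norm_sub_sq_real, inner_smul_right, norm_smul]
      rw [Real.norm_eq_abs, abs_of_pos hα]
      ring
    have h2 : ‖w₁ - α • u‖ ^ 2 ≤ ‖w₁‖ ^ 2 := by
      rw [hns, hinner]
      have n1 : 0 ≤ α * ‖K u‖ ^ 2 := by positivity
      have n2 : 0 ≤ α * ‖P u‖ ^ 2 := by positivity
      have n3 : 0 ≤ α ^ 2 * ‖u‖ ^ 2 := by positivity
      nlinarith [n1, n2, n3]
    have h3 : ‖w₁ - α • u‖ ^ 2 ≤ ‖wvec‖ ^ 2 := by
      refine h2.trans ?_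
      have := hw₁le
      nlinarith [norm_nonneg w₁, norm_nonneg wvec]
    calc ‖w₁ - α • u‖ = Real.sqrt (‖w₁ - α • u‖ ^ 2) := (Real.sqrt_sq (norm_nonneg _)).symm
      _ ≤ Real.sqrt (‖wvec‖ ^ 2) := Real.sqrt_le_sqrt h3
      _ = ‖wvec‖ := Real.sqrt_sq (norm_nonneg _)
  -- Assemble
  rw [hid, map_add, map_add, map_smul]
  calc ‖T.symm ((ContinuousLinearMap.adjoint K) η)
        + T.symm (((ContinuousLinearMap.adjoint K).comp K) wvec) + α • T.symm v‖
      ≤ ‖T.symm ((ContinuousLinearMap.adjoint K) η)‖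
        + ‖T.symm (((ContinuousLinearMap.adjoint K).comp K) wvec)‖ + ‖α • T.symm v‖ :=
        norm_add₃_le
    _ ≤ δ / Real.sqrt α + c * ‖xn - xdag‖ + α * ‖T.symm v‖ := by
        rw [hsymmKK, norm_smul, Real.norm_eq_abs, abs_of_pos hα]
        gcongr
        exact hb2.trans hw
end

section
/- Let J : X̃ × U → [0,∞] be a functional, (r̂^δ, x^δ) an η-approximate minimizer (i.e., J(r̂^δ, x^δ) ≤ J(r̂, x) + η for all (r̂,x)), where J(r̂,x) = ‖Kr̂ + F(x₀) − y^δ‖^p + α·R(r̂) + β‖r(x) − r̂‖^b + P(x), with ‖y − y^δ‖ ≤ δ, P(x†) = 0, and exact solution satisfying K r(x†) + F(x₀) = y. If α, β, η, δ → 0 with δ^p/α → 0, η/α → 0, δ^p/β → 0, α/β → 0, η/β → 0, then: (a) limsup R(r̂^δ) ≤ R(r(x†)); (b) ‖r(x^δ) − r̂^δ‖ → 0; (c) ‖K r̂^δ + F(x₀) − y^δ‖ → 0; (d) P(x^δ) → 0. -/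
open Filter

private lemma root_tendsto_aux {f : ℕ → ℝ} (hf : ∀ n, 0 ≤ f n) {q : ℝ} (hq : 1 ≤ q)
    (h : Tendsto (fun n => f n ^ q) atTop (nhds 0)) : Tendsto f atTop (nhds 0) := by
  have hq0 : (0:ℝ) < q := lt_of_lt_of_le one_pos hq
  have hcont : Tendsto (fun n => (f n ^ q) ^ q⁻¹) atTop (nhds ((0:ℝ) ^ q⁻¹)) :=
    (Real.continuousAt_rpow_const 0 q⁻¹ (Or.inr (by positivity))).tendsto.comp h
  rw [Real.zero_rpow (inv_ne_zero hq0.ne')] at hcont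
  exact hcont.congr fun n => Real.rpow_rpow_inv (hf n) hq0.ne'

/-- Convergence properties of η-approximate minimizers of the variational functional
`J(r̂,x) = ‖K r̂ + F(x₀) − y^δ‖^p + α R(r̂) + β ‖r(x) − r̂‖^b + P(x)` under the
parameter-choice conditions `δ^p/α → 0`, `η/α → 0`, `δ^p/β → 0`, `α/β → 0`,
`η/β → 0`, `α → 0`, `η → 0` (and `δ → 0`): (a) `limsup R(r̂^δ) ≤ R(r(x†))`;
(b) `‖r(x^δ) − r̂^δ‖ → 0`; (c) `‖K r̂^δ + F(x₀) − y^δ‖ → 0`; (d) `P(x^δ) → 0`. -/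
theorem variational_approximate_minimizers_limits
    {X Xt Y : Type*}
    [NormedAddCommGroup X] [NormedSpace ℝ X]
    [NormedAddCommGroup Xt] [NormedSpace ℝ Xt]
    [NormedAddCommGroup Y] [NormedSpace ℝ Y]
    (U : Set X) (K : Xt →L[ℝ] Y) (F : X → Y) (r : X → Xt)
    (Rfun : Xt → ENNReal) (Pfun : X → ENNReal)
    (x₀ xdag : X) (hxdag : xdag ∈ U)
    (hPdag : Pfun xdag = 0) (hRfin : Rfun (r xdag) ≠ ⊤)
    (p b : ℝ) (hp : 1 ≤ p) (hb : 1 ≤ b)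
    (y : Y) (hexact : K (r xdag) + F x₀ = y)
    (δ α β η : ℕ → ℝ) (yδ : ℕ → Y)
    (hδ : ∀ n, 0 ≤ δ n) (hα : ∀ n, 0 < α n) (hβ : ∀ n, 0 < β n) (hη : ∀ n, 0 ≤ η n)
    (hnoise : ∀ n, ‖y - yδ n‖ ≤ δ n)
    (J : ℕ → Xt → X → ENNReal)
    (hJ : ∀ n rh x, J n rh x =
        ENNReal.ofReal (‖K rh + F x₀ - yδ n‖ ^ p)
        + ENNReal.ofReal (α n) * Rfun rh
        + ENNReal.ofReal (β n) * ENNReal.ofReal (‖r x - rh‖ ^ b)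
        + Pfun x)
    (rh : ℕ → Xt) (xs : ℕ → X) (hxsU : ∀ n, xs n ∈ U)
    (hmin : ∀ n, ∀ r' : Xt, ∀ x' ∈ U,
        J n (rh n) (xs n) ≤ J n r' x' + ENNReal.ofReal (η n))
    (h1 : Tendsto (fun n => δ n ^ p / α n) atTop (nhds 0))
    (h2 : Tendsto (fun n => η n / α n) atTop (nhds 0))
    (h3 : Tendsto (fun n => δ n ^ p / β n) atTop (nhds 0))
    (h4 : Tendsto (fun n => α n / β n) atTop (nhds 0))
    (h5 : Tendsto (fun n => η n / β n) atTop (nhds 0))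
    (h6 : Tendsto α atTop (nhds 0))
    (h7 : Tendsto η atTop (nhds 0))
    (h8 : Tendsto δ atTop (nhds 0)) :
    Filter.limsup (fun n => Rfun (rh n)) atTop ≤ Rfun (r xdag) ∧
    Tendsto (fun n => ‖r (xs n) - rh n‖) atTop (nhds 0) ∧
    Tendsto (fun n => ‖K (rh n) + F x₀ - yδ n‖) atTop (nhds 0) ∧
    Tendsto (fun n => Pfun (xs n)) atTop (nhds 0) := by
  have hp0 : (0:ℝ) < p := lt_of_lt_of_le one_pos hp
  have hb0 : (0:ℝ) < b := lt_of_lt_of_le one_pos hb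
  set Rt : ℝ := (Rfun (r xdag)).toReal with hRtdef
  have hRt0 : 0 ≤ Rt := ENNReal.toReal_nonneg
  have hRofReal : Rfun (r xdag) = ENNReal.ofReal Rt := (ENNReal.ofReal_toReal hRfin).symm
  set D : ℕ → ℝ := fun n => δ n ^ p + α n * Rt + η n with hDdef
  have hDnn : ∀ n, 0 ≤ D n := by
    intro n
    have h1' := hδ n
    have h2' := (hα n).le
    have h3' := hη n
    have : 0 ≤ δ n ^ p := Real.rpow_nonneg h1' p
    simp only [hDdef]
    positivity
  -- key inequality : J at the approximate minimizer is ≤ ofReal (D n)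
  have key : ∀ n, J n (rh n) (xs n) ≤ ENNReal.ofReal (D n) := by
    intro n
    have h := hmin n (r xdag) xdag hxdag
    rw [hJ n (r xdag) xdag] at h
    have e1 : K (r xdag) + F x₀ - yδ n = y - yδ n := by rw [hexact]
    rw [e1, hPdag, sub_self, norm_zero, Real.zero_rpow hb0.ne'] at h
    simp only [ENNReal.ofReal_zero, mul_zero, add_zero] at h
    refine h.trans ?_
    have hle : ‖y - yδ n‖ ^ p + α n * Rt + η n ≤ D n := by
      have : ‖y - yδ n‖ ^ p ≤ δ n ^ p :=
        Real.rpow_le_rpow (norm_nonneg _) (hnoise n) hp0.le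
      simp only [hDdef]; linarith
    calc ENNReal.ofReal (‖y - yδ n‖ ^ p) + ENNReal.ofReal (α n) * Rfun (r xdag)
          + ENNReal.ofReal (η n)
        = ENNReal.ofReal (‖y - yδ n‖ ^ p + α n * Rt + η n) := by
          rw [hRofReal, ← ENNReal.ofReal_mul (hα n).le, ← ENNReal.ofReal_add
            (Real.rpow_nonneg (norm_nonneg _) p) (mul_nonneg (hα n).le hRt0),
            ← ENNReal.ofReal_add (add_nonneg (Real.rpow_nonneg (norm_nonneg _) p)
              (mul_nonneg (hα n).le hRt0)) (hη n)]
      _ ≤ ENNReal.ofReal (D n) := ENNReal.ofReal_le_ofReal hle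
  -- termwise bounds
  have term1 : ∀ n, ENNReal.ofReal (‖K (rh n) + F x₀ - yδ n‖ ^ p) ≤ ENNReal.ofReal (D n) := by
    intro n
    refine le_trans ?_ (key n)
    rw [hJ]
    exact le_add_right (le_add_right le_self_add)
  have term2 : ∀ n, ENNReal.ofReal (α n) * Rfun (rh n) ≤ ENNReal.ofReal (D n) := by
    intro n
    refine le_trans ?_ (key n)
    rw [hJ]
    exact le_add_right (le_add_right le_add_self)
  have term3 : ∀ n, ENNReal.ofReal (β n) * ENNReal.ofReal (‖r (xs n) - rh n‖ ^ b)
      ≤ ENNReal.ofReal (D n) := by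
    intro n
    refine le_trans ?_ (key n)
    rw [hJ]
    exact le_add_right le_add_self
  have term4 : ∀ n, Pfun (xs n) ≤ ENNReal.ofReal (D n) := by
    intro n
    refine le_trans ?_ (key n)
    rw [hJ]
    exact le_add_self
  -- limits of the bound sequences
  have hδp : Tendsto (fun n => δ n ^ p) atTop (nhds 0) := by
    have := h1.mul h6
    rw [mul_zero] at this
    exact this.congr fun n => div_mul_cancel₀ _ (hα n).ne'
  have hD0 : Tendsto D atTop (nhds 0) := by
    have := (hδp.add (h6.mul_const Rt)).add h7
    simpa using this
  have hDβ : Tendsto (fun n => D n / β n) atTop (nhds 0) := by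
    have := (h3.add ((h4.mul_const Rt))).add h5
    simp only [zero_mul, add_zero, zero_add] at this
    refine this.congr fun n => ?_
    simp only [hDdef]
    field_simp
  have hDα : Tendsto (fun n => D n / α n) atTop (nhds Rt) := by
    have := (h1.add (tendsto_const_nhds (x := Rt))).add h2
    simp only [zero_add, add_zero] at this
    refine this.congr fun n => ?_
    simp only [hDdef]
    rw [add_div, add_div, mul_comm (α n) Rt, mul_div_assoc, div_self (hα n).ne', mul_one]
  -- (a) limsup bound
  have parta : Filter.limsup (fun n => Rfun (rh n)) atTop ≤ Rfun (r xdag) := by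
    have hle : ∀ n, Rfun (rh n) ≤ ENNReal.ofReal (D n / α n) := by
      intro n
      rw [ENNReal.ofReal_div_of_pos (hα n)]
      rw [ENNReal.le_div_iff_mul_le
        (Or.inl (by simpa [ENNReal.ofReal_eq_zero] using (hα n).not_ge))
        (Or.inl ENNReal.ofReal_ne_top), mul_comm]
      exact term2 n
    have hlim : Tendsto (fun n => ENNReal.ofReal (D n / α n)) atTop (nhds (Rfun (r xdag))) := by
      rw [hRofReal]
      exact (ENNReal.continuous_ofReal.tendsto Rt).comp hDα
    calc Filter.limsup (fun n => Rfun (rh n)) atTop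
        ≤ Filter.limsup (fun n => ENNReal.ofReal (D n / α n)) atTop :=
          limsup_le_limsup (Eventually.of_forall hle)
      _ = Rfun (r xdag) := hlim.limsup_eq
  -- (b)
  have partb : Tendsto (fun n => ‖r (xs n) - rh n‖) atTop (nhds 0) := by
    refine root_tendsto_aux (fun n => norm_nonneg _) hb ?_
    have hle : ∀ n, ‖r (xs n) - rh n‖ ^ b ≤ D n / β n := by
      intro n
      have h' := term3 n
      rw [← ENNReal.ofReal_mul (hβ n).le] at h'
      have := (ENNReal.ofReal_le_ofReal_iff (hDnn n)).mp h'
      rw [le_div_iff₀ (hβ n), mul_comm]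
      exact this
    exact squeeze_zero (fun n => Real.rpow_nonneg (norm_nonneg _) b) hle hDβ
  -- (c)
  have partc : Tendsto (fun n => ‖K (rh n) + F x₀ - yδ n‖) atTop (nhds 0) := by
    refine root_tendsto_aux (fun n => norm_nonneg _) hp ?_
    have hle : ∀ n, ‖K (rh n) + F x₀ - yδ n‖ ^ p ≤ D n :=
      fun n => (ENNReal.ofReal_le_ofReal_iff (hDnn n)).mp (term1 n)
    exact squeeze_zero (fun n => Real.rpow_nonneg (norm_nonneg _) p) hle hD0
  -- (d)
  have partd : Tendsto (fun n => Pfun (xs n)) atTop (nhds 0) := by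
    have hof : Tendsto (fun n => ENNReal.ofReal (D n)) atTop (nhds 0) := by
      have := (ENNReal.continuous_ofReal.tendsto 0).comp hD0
      simpa [Function.comp_def] using this
    exact tendsto_of_tendsto_of_tendsto_of_le_of_le tendsto_const_nhds hof
      (fun n => zero_le) term4
  exact ⟨parta, partb, partc, partd⟩
end
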